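/- Let $n \ge 3$, $d \ge 2$, $l \in \{2,\dots,d\}$, $k \in \{3,\dots,n\}$, and let $X \in \mathbb{R}^{n \times d}$ be the Case-1 matrix with rows $X_1 = -\tfrac{1}{\sqrt{2}} e_1 + \tfrac{1}{\sqrt{2}} e_l$, $X_k = e_1$, and $X_i = \tfrac{1}{\sqrt{2}} e_1 + \tfrac{1}{\sqrt{2}} e_l$ for all $i \in \{2,\dots,n\} \setminus \{k\}$. Then for every $w \in \mathbb{R}^d$, $\max_{i \in \{1,\dots,n\}} \|w - X_i\|^2 \ge \left(w_1 - \left(\tfrac{1}{2} - \tfrac{\sqrt{2}}{4}\right)\right)^2 + \left(w_l - \tfrac{\sqrt{2}}{4}\right)^2 + \sum_{j \notin \{1, l\}} w_j^2 + \tfrac{2+\sqrt{2}}{4}$. -/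

import Mathlib

lemma euclid_norm_sq_eq {d : ℕ} (x : EuclideanSpace ℝ (Fin d)) :
    ‖x‖ ^ 2 = ∑ i, x i ^ 2 := by
  rw [EuclideanSpace.norm_eq, Real.sq_sqrt (by positivity)]
  simp [Real.norm_eq_abs, sq_abs]

/-- Pointwise lower bound on the enclosing-ball radius of the Case-1 instance
in the quantum lower bound for minimum enclosing ball. -/
theorem case1_meb_pointwise_bound (n d : ℕ) (hn : 3 ≤ n) (hd : 2 ≤ d)
    (l : Fin d) (hl : (l : ℕ) ≠ 0)
    (k : Fin n) (hk : 2 ≤ (k : ℕ))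
    (X : Fin n → EuclideanSpace ℝ (Fin d))
    (hX1 : ∀ i : Fin n, (i : ℕ) = 0 →
      X i = -((Real.sqrt 2)⁻¹ • EuclideanSpace.single (⟨0, by omega⟩ : Fin d) (1 : ℝ))
        + (Real.sqrt 2)⁻¹ • EuclideanSpace.single l (1 : ℝ))
    (hXk : X k = EuclideanSpace.single (⟨0, by omega⟩ : Fin d) (1 : ℝ))
    (hXi : ∀ i : Fin n, (i : ℕ) ≠ 0 → i ≠ k →
      X i = (Real.sqrt 2)⁻¹ • EuclideanSpace.single (⟨0, by omega⟩ : Fin d) (1 : ℝ)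
        + (Real.sqrt 2)⁻¹ • EuclideanSpace.single l (1 : ℝ))
    (w : EuclideanSpace ℝ (Fin d)) :
    (⨆ i : Fin n, ‖w - X i‖ ^ 2)
      ≥ (w (⟨0, by omega⟩ : Fin d) - (1 / 2 - Real.sqrt 2 / 4)) ^ 2
        + (w l - Real.sqrt 2 / 4) ^ 2
        + (∑ j ∈ Finset.univ \ {(⟨0, by omega⟩ : Fin d), l}, (w j) ^ 2)
        + (2 + Real.sqrt 2) / 4 := by
  set i0 : Fin d := ⟨0, by omega⟩ with hi0
  have hi0l : i0 ≠ l := by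
    intro h
    exact hl (by rw [← h])
  have hnz : Nonempty (Fin n) := ⟨⟨0, by omega⟩⟩
  set z0 : Fin n := ⟨0, by omega⟩ with hz0
  have hbdd : BddAbove (Set.range fun i : Fin n => ‖w - X i‖ ^ 2) :=
    (Set.finite_range _).bddAbove
  have hA : ‖w - X z0‖ ^ 2 ≤ ⨆ i : Fin n, ‖w - X i‖ ^ 2 := le_ciSup hbdd z0
  have hB : ‖w - X k‖ ^ 2 ≤ ⨆ i : Fin n, ‖w - X i‖ ^ 2 := le_ciSup hbdd k
  -- square root facts
  have hs2 : Real.sqrt 2 ^ 2 = 2 := Real.sq_sqrt (by norm_num)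
  have hs2pos : (0:ℝ) < Real.sqrt 2 := Real.sqrt_pos.mpr (by norm_num)
  have hinv : (Real.sqrt 2)⁻¹ = Real.sqrt 2 / 2 := by
    rw [eq_div_iff (by norm_num), inv_mul_eq_div, div_eq_iff hs2pos.ne']
    nlinarith
  -- split a sum over all coordinates
  have hsplit : ∀ f : Fin d → ℝ, ∑ j, f j
      = f i0 + f l + ∑ j ∈ Finset.univ \ {i0, l}, f j := by
    intro f
    have hsub : ({i0, l} : Finset (Fin d)) ⊆ Finset.univ := Finset.subset_univ _
    rw [← Finset.sum_sdiff hsub, Finset.sum_pair hi0l]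
    ring
  -- coordinate values
  have hXz0 := hX1 z0 rfl
  have hA' : ‖w - X z0‖ ^ 2 = (w i0 + Real.sqrt 2 / 2) ^ 2
      + (w l - Real.sqrt 2 / 2) ^ 2 + ∑ j ∈ Finset.univ \ {i0, l}, (w j) ^ 2 := by
    rw [euclid_norm_sq_eq, hsplit]
    have h1 : ∀ j, (w - X z0) j = w j -
        (-(Real.sqrt 2 / 2 * (if j = i0 then (1:ℝ) else 0))
          + Real.sqrt 2 / 2 * (if j = l then (1:ℝ) else 0)) := by
      intro j
      rw [hXz0]
      simp [EuclideanSpace.single_apply, hinv]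
    rw [h1 i0, h1 l]
    simp only [if_pos rfl, if_neg hi0l, if_neg (Ne.symm hi0l)]
    have h2 : ∑ j ∈ Finset.univ \ {i0, l}, ((w - X z0) j) ^ 2
        = ∑ j ∈ Finset.univ \ {i0, l}, (w j) ^ 2 := by
      refine Finset.sum_congr rfl fun j hj => ?_
      simp only [Finset.mem_sdiff, Finset.mem_insert, Finset.mem_singleton] at hj
      rw [h1 j, if_neg (by tauto), if_neg (by tauto)]
      ring
    rw [h2]
    simp only [if_true]
    ring
  have hB' : ‖w - X k‖ ^ 2 = (w i0 - 1) ^ 2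
      + (w l) ^ 2 + ∑ j ∈ Finset.univ \ {i0, l}, (w j) ^ 2 := by
    rw [euclid_norm_sq_eq, hsplit]
    have h1 : ∀ j, (w - X k) j = w j - (if j = i0 then (1:ℝ) else 0) := by
      intro j
      rw [hXk]
      simp [EuclideanSpace.single_apply]
    rw [h1 i0, h1 l]
    simp only [if_pos rfl, if_neg (Ne.symm hi0l)]
    have h2 : ∑ j ∈ Finset.univ \ {i0, l}, ((w - X k) j) ^ 2
        = ∑ j ∈ Finset.univ \ {i0, l}, (w j) ^ 2 := by
      refine Finset.sum_congr rfl fun j hj => ?_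
      simp only [Finset.mem_sdiff, Finset.mem_insert, Finset.mem_singleton] at hj
      rw [h1 j, if_neg (by tauto)]
      ring
    rw [h2]
    simp only [if_true]
    ring
  have key : (w i0 - (1 / 2 - Real.sqrt 2 / 4)) ^ 2
        + (w l - Real.sqrt 2 / 4) ^ 2
        + (∑ j ∈ Finset.univ \ {i0, l}, (w j) ^ 2)
        + (2 + Real.sqrt 2) / 4
      = (‖w - X z0‖ ^ 2 + ‖w - X k‖ ^ 2) / 2 := by
    rw [hA', hB']
    nlinarith [hs2]
  rw [ge_iff_le, key]
  linarith
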